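/- Let 𝔠 ⊆ M be the commutative unital subalgebra generated by {n_k : k ∈ Fin n}, and let K = { A ∈ 𝔠 : ρ(A) = 0 } be the subspace of elements of 𝔠 orthogonal to the identity in the GNS inner product. Then the family { σ_Z : Z a nonempty subset of Fin n } is an orthonormal basis of K with respect to ⟨A, B⟩ = ρ(Aᴴ B). -/

import Mathlib

/-!
Everything is diagonal in the occupation basis: `n_k` is the indicator that site `k` is occupied,
`exp(-βF)` is a product of one-site Boltzmann weights `(e^{-t}, 1)` with `t = β(ε_k - μ)`, and
`σ_Z` is the product over `Z` of the one-site functions `σ_x = (e^{t/2}, -e^{-t/2})`. Each `σ_x`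
has mean zero and mean square one for its site weight, so by independence of the sites the `σ_Z`
are orthonormal for `ρ`, with `σ_∅ = 1`. Being orthonormal they are linearly independent, and
there are `2^n` of them in the `2^n`-dimensional diagonal algebra, which contains the algebra
generated by the `n_k`. Hence they span it, and the `σ_Z` with `Z ≠ ∅` span the kernel of `ρ`.
-/

open Matrix

noncomputable section JW

/-- The operator algebra of `n` fermionic sites: `2^n × 2^n` complex matrices, with the
index set realized as `Fin n → Fin 2` (the tensor-product basis). -/
abbrev FermionAlg (n : ℕ) := Matrix (Fin n → Fin 2) (Fin n → Fin 2) ℂ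

/-- Jordan–Wigner annihilation operator at site `k`:
`a_k = σ₃^{⊗ k} ⊗ σ⁻ ⊗ 1₂^{⊗ (n−k−1)}`, with `σ⁻ = [[0,0],[1,0]]` and
`σ₃ = [[1,0],[0,−1]]`, written entrywise in the tensor-product basis
(the entry of a tensor product at `(v, w)` is the product of the entries of the factors). -/
def jwA (n : ℕ) (k : Fin n) : FermionAlg n :=
  Matrix.of fun v w => ∏ j : Fin n,
    if j < k then (if v j = w j then (-1 : ℂ) ^ (v j : ℕ) else 0)
    else if j = k then (if v j = 1 ∧ w j = 0 then 1 else 0)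
    else (if v j = w j then 1 else 0)

/-- The number operator `n_k = a_kᴴ a_k`. -/
def numOp (n : ℕ) (k : Fin n) : FermionAlg n := (jwA n k)ᴴ * jwA n k

/-- The grading unitary `G = ∏_k (1 − 2 n_k)`. -/
def grading (n : ℕ) : FermionAlg n :=
  (List.ofFn fun k : Fin n => (1 - 2 • numOp n k)).prod

/-- The free energy `F = Σ_k (ε_k − μ) n_k`. -/
def freeEnergy (n : ℕ) (ε : Fin n → ℝ) (μ : ℝ) : FermionAlg n :=
  ∑ k, ((ε k - μ : ℝ) : ℂ) • numOp n k

/-- The Gibbs state `ρ(A) = Tr(exp(−βF)·A)/Tr(exp(−βF))`. -/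
def gibbs (n : ℕ) (ε : Fin n → ℝ) (μ β : ℝ) (A : FermionAlg n) : ℂ :=
  ((NormedSpace.exp ((-(β : ℂ)) • freeEnergy n ε μ)) * A).trace /
    (NormedSpace.exp ((-(β : ℂ)) • freeEnergy n ε μ)).trace

end JW

noncomputable section

/-- `σ_x = e^{β(ε_x−μ)/2} n_x − e^{−β(ε_x−μ)/2}(1 − n_x)`. -/
def sOp (n : ℕ) (β μ : ℝ) (ε : Fin n → ℝ) (x : Fin n) : FermionAlg n :=
  ((Real.exp (β * (ε x - μ) / 2) : ℝ) : ℂ) • numOp n x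
    - ((Real.exp (-(β * (ε x - μ)) / 2) : ℝ) : ℂ) • (1 - numOp n x)

/-- `σ_Z = σ_{z₁}⋯σ_{z_m}` (empty product = 1). -/
def sProd (n : ℕ) (β μ : ℝ) (ε : Fin n → ℝ) (Z : Finset (Fin n)) : FermionAlg n :=
  ((Z.sort (· ≤ ·)).map (sOp n β μ ε)).prod

section

open Finset

theorem sum_prod_mul_prod_mul_prod {ι α R : Type*} [Fintype ι] [DecidableEq ι] [Fintype α]
    [CommSemiring R] {w s : ι → α → R} (hs : ∀ i, ∑ a, w i a * s i a = 0)
    (hs2 : ∀ i, ∑ a, w i a * s i a ^ 2 = ∑ a, w i a) (Z Z' : Finset ι) :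
    ∑ v : ι → α, (∏ i, w i (v i)) * ((∏ i ∈ Z, s i (v i)) * ∏ i ∈ Z', s i (v i)) =
      if Z = Z' then ∏ i, ∑ a, w i a else 0 := by
  have hsite (v : ι → α) : (∏ i, w i (v i)) * ((∏ i ∈ Z, s i (v i)) * ∏ i ∈ Z', s i (v i)) =
      ∏ i, w i (v i) * ((if i ∈ Z then s i (v i) else 1) * if i ∈ Z' then s i (v i) else 1) := by
    rw [prod_mul_distrib, prod_mul_distrib, Fintype.prod_ite_mem, Fintype.prod_ite_mem]
  simp only [hsite]
  rw [← Fintype.prod_sum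
    (fun i a => w i a * ((if i ∈ Z then s i a else 1) * if i ∈ Z' then s i a else 1))]
  split_ifs with hZ
  · subst hZ
    refine prod_congr rfl fun i _ => ?_
    split_ifs
    · simp_rw [← sq, hs2]
    · simp
  · obtain ⟨i, hi⟩ : ∃ i, ¬(i ∈ Z ↔ i ∈ Z') := by
      by_contra! h
      exact hZ (ext h)
    refine prod_eq_zero (mem_univ i) ?_
    rcases Decidable.em (i ∈ Z) with h | h <;> simp_all

/-- Boltzmann weight of one site with `t = β(ε - μ)`; basis state `0` is the occupied one. -/
def occWeight (t : ℝ) : Fin 2 → ℝ := ![Real.exp (-t), 1]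

def occSigma (t : ℝ) : Fin 2 → ℝ := ![Real.exp (t / 2), -Real.exp (-t / 2)]

theorem sum_occWeight_mul_occSigma (t : ℝ) : ∑ b, occWeight t b * occSigma t b = 0 := by
  simp only [Fin.sum_univ_two, occWeight, occSigma, Matrix.cons_val_zero, Matrix.cons_val_one,
    ← Real.exp_add]
  ring_nf

theorem sum_occWeight_mul_occSigma_sq (t : ℝ) :
    ∑ b, occWeight t b * occSigma t b ^ 2 = ∑ b, occWeight t b := by
  simp only [Fin.sum_univ_two, occWeight, occSigma, Matrix.cons_val_zero, Matrix.cons_val_one,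
    neg_sq, ← Real.exp_nat_mul, ← Real.exp_add]
  ring_nf
  simp

variable {n : ℕ}

theorem jwA_apply (k : Fin n) (u v : Fin n → Fin 2) :
    jwA n k u v = if v k = 0 ∧ u = Function.update v k 1 then
      ∏ j ∈ univ.filter (· < k), (-1 : ℂ) ^ (v j : ℕ) else 0 := by
  rw [jwA, Matrix.of_apply]
  split_ifs with h
  · obtain ⟨hv, rfl⟩ := h
    rw [prod_filter]
    refine prod_congr rfl fun j _ => ?_
    rcases lt_trichotomy j k with hjk | rfl | hjk
    · simp [hjk, Function.update_of_ne hjk.ne]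
    · simp [hv]
    · simp [hjk.not_gt, hjk.ne']
  · refine prod_eq_zero_iff.2 ?_
    by_cases hv : v k = 0
    · obtain ⟨j, hj⟩ : ∃ j, u j ≠ Function.update v k 1 j :=
        Function.ne_iff.1 fun hu => h ⟨hv, hu⟩
      refine ⟨j, mem_univ j, ?_⟩
      rcases lt_trichotomy j k with hjk | rfl | hjk
      · simp_all [Function.update_of_ne hjk.ne]
      · simp_all
      · simp_all [hjk.not_gt, hjk.ne']
    · exact ⟨k, mem_univ k, by simp [hv]⟩

theorem numOp_eq_diagonal (k : Fin n) :
    numOp n k = Matrix.diagonal fun v => if v k = 0 then 1 else 0 := by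
  ext v w
  rw [numOp, Matrix.mul_apply, sum_eq_single (Function.update v k 1)]
  · simp only [Matrix.conjTranspose_apply, jwA_apply, Matrix.diagonal_apply]
    by_cases hv : v k = 0
    · by_cases hvw : v = w
      · subst hvw
        simp only [hv, and_self, if_true, star_prod, ← prod_mul_distrib]
        refine prod_eq_one fun j _ => ?_
        rw [star_pow, star_neg, star_one, ← mul_pow, neg_one_mul, neg_neg, one_pow]
      · have hw : ¬(w k = 0 ∧ Function.update v k 1 = Function.update w k 1) := by
          refine fun ⟨hw, h⟩ => hvw (funext fun j => ?_)
          by_cases hj : j = k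
          · rw [hj, hv, hw]
          · simpa [Function.update_of_ne hj] using congrFun h j
        simp [hvw, hw]
    · simp [hv]
  · intro u _ hu
    simp [jwA_apply, hu]
  · simp

variable (β μ : ℝ) (ε : Fin n → ℝ)

def gibbsWeight (v : Fin n → Fin 2) : ℂ := ∏ k, (occWeight (β * (ε k - μ)) (v k) : ℂ)

def sigmaDiag (Z : Finset (Fin n)) (v : Fin n → Fin 2) : ℂ :=
  ∏ k ∈ Z, (occSigma (β * (ε k - μ)) (v k) : ℂ)

theorem sOp_eq_diagonal (x : Fin n) :
    sOp n β μ ε x = Matrix.diagonal fun v => (occSigma (β * (ε x - μ)) (v x) : ℂ) := by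
  rw [sOp, numOp_eq_diagonal]
  ext v w
  rcases eq_or_ne v w with rfl | hvw
  · obtain h | h : v x = 0 ∨ v x = 1 := by omega
    all_goals simp [h, occSigma]
  · simp [Matrix.diagonal_apply_ne _ hvw, Matrix.one_apply_ne hvw]

theorem sProd_eq_diagonal (Z : Finset (Fin n)) :
    sProd n β μ ε Z = Matrix.diagonal (sigmaDiag β μ ε Z) := by
  have hsOp : sOp n β μ ε = Matrix.diagonalRingHom _ ℂ ∘
      fun x v => (occSigma (β * (ε x - μ)) (v x) : ℂ) :=
    funext (sOp_eq_diagonal β μ ε)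
  rw [sProd, hsOp, ← List.map_map, ← map_list_prod,
    (List.Perm.map _ (sort_perm_toList _ _)).prod_eq, prod_map_toList]
  exact congrArg Matrix.diagonal (funext fun v => prod_apply v _ _)

theorem sProd_empty : sProd n β μ ε ∅ = 1 := by
  simp [sProd]

theorem exp_neg_smul_freeEnergy :
    NormedSpace.exp ((-(β : ℂ)) • freeEnergy n ε μ) = Matrix.diagonal (gibbsWeight β μ ε) := by
  have hF : (-(β : ℂ)) • freeEnergy n ε μ = Matrix.diagonal fun v =>
      ∑ k, if v k = 0 then -((β : ℂ) * (ε k - μ)) else 0 := by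
    ext v w
    rcases eq_or_ne v w with rfl | hvw
    · simp [freeEnergy, numOp_eq_diagonal, Matrix.sum_apply, mul_sum]
    · simp [freeEnergy, numOp_eq_diagonal, Matrix.sum_apply, Matrix.diagonal_apply_ne _ hvw]
  rw [hF, Matrix.exp_diagonal]
  congr 1
  funext v
  simp only [Pi.exp_def, ← Complex.exp_eq_exp_ℂ, Complex.exp_sum, gibbsWeight]
  refine prod_congr rfl fun k _ => ?_
  obtain h | h : v k = 0 ∨ v k = 1 := by omega
  all_goals simp [h, occWeight, Complex.ofReal_exp]

theorem gibbs_diagonal (f : (Fin n → Fin 2) → ℂ) :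
    gibbs n ε μ β (Matrix.diagonal f) =
      (∑ v, gibbsWeight β μ ε v * f v) / ∑ v, gibbsWeight β μ ε v := by
  rw [gibbs, exp_neg_smul_freeEnergy, Matrix.diagonal_mul_diagonal, Matrix.trace_diagonal,
    Matrix.trace_diagonal]

theorem sum_gibbsWeight_mul_sigmaDiag_mul_sigmaDiag (Z Z' : Finset (Fin n)) :
    ∑ v, gibbsWeight β μ ε v * (sigmaDiag β μ ε Z v * sigmaDiag β μ ε Z' v) =
      if Z = Z' then ∏ k, ∑ b, (occWeight (β * (ε k - μ)) b : ℂ) else 0 :=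
  sum_prod_mul_prod_mul_prod (w := fun k b => (occWeight (β * (ε k - μ)) b : ℂ))
    (s := fun k b => (occSigma (β * (ε k - μ)) b : ℂ))
    (fun k => by exact_mod_cast sum_occWeight_mul_occSigma (β * (ε k - μ)))
    (fun k => by exact_mod_cast sum_occWeight_mul_occSigma_sq (β * (ε k - μ))) Z Z'

theorem sum_gibbsWeight :
    ∑ v, gibbsWeight β μ ε v = ∏ k, ∑ b, (occWeight (β * (ε k - μ)) b : ℂ) :=
  (Fintype.prod_sum fun k b => (occWeight (β * (ε k - μ)) b : ℂ)).symm

theorem sum_gibbsWeight_ne_zero : ∑ v, gibbsWeight β μ ε v ≠ 0 := by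
  rw [sum_gibbsWeight]
  refine prod_ne_zero_iff.2 fun k _ => ?_
  have hpos : 0 < ∑ b, occWeight (β * (ε k - μ)) b := by
    simp only [Fin.sum_univ_two, occWeight, Matrix.cons_val_zero, Matrix.cons_val_one]
    positivity
  exact_mod_cast hpos.ne'

theorem star_sigmaDiag (Z : Finset (Fin n)) : star (sigmaDiag β μ ε Z) = sigmaDiag β μ ε Z :=
  funext fun v => by simp [sigmaDiag, Complex.conj_ofReal]

theorem gibbs_conjTranspose_sProd_mul_sProd (Z Z' : Finset (Fin n)) :
    gibbs n ε μ β ((sProd n β μ ε Z)ᴴ * sProd n β μ ε Z') = if Z = Z' then 1 else 0 := by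
  rw [sProd_eq_diagonal, sProd_eq_diagonal, Matrix.diagonal_conjTranspose, star_sigmaDiag,
    Matrix.diagonal_mul_diagonal, gibbs_diagonal, sum_gibbsWeight_mul_sigmaDiag_mul_sigmaDiag,
    ← sum_gibbsWeight]
  split_ifs
  · exact div_self (sum_gibbsWeight_ne_zero β μ ε)
  · exact zero_div _

theorem gibbs_one : gibbs n ε μ β 1 = 1 := by
  simpa [sProd_empty] using gibbs_conjTranspose_sProd_mul_sProd β μ ε ∅ ∅

theorem gibbs_sProd_of_ne_empty {Z : Finset (Fin n)} (hZ : Z ≠ ∅) :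
    gibbs n ε μ β (sProd n β μ ε Z) = 0 := by
  simpa [sProd_empty, Ne.symm hZ] using gibbs_conjTranspose_sProd_mul_sProd β μ ε ∅ Z

@[simps]
def gibbsLinearMap : FermionAlg n →ₗ[ℂ] ℂ where
  toFun := gibbs n ε μ β
  map_add' A B := by simp only [gibbs, Matrix.mul_add, Matrix.trace_add, add_div]
  map_smul' c A := by
    simp only [gibbs, Matrix.mul_smul, Matrix.trace_smul, smul_eq_mul, mul_div_assoc,
      RingHom.id_apply]

def gnsForm : FermionAlg n →ₗ⋆[ℂ] FermionAlg n →ₗ[ℂ] ℂ :=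
  LinearMap.mk₂'ₛₗ (starRingEnd ℂ) (RingHom.id ℂ) (fun A B => gibbs n ε μ β (Aᴴ * B))
    (fun A A' B => by
      rw [Matrix.conjTranspose_add, Matrix.add_mul]; exact map_add (gibbsLinearMap β μ ε) _ _)
    (fun c A B => by
      rw [Matrix.conjTranspose_smul, Matrix.smul_mul]; exact map_smul (gibbsLinearMap β μ ε) _ _)
    (fun A B B' => by rw [Matrix.mul_add]; exact map_add (gibbsLinearMap β μ ε) _ _)
    (fun c A B => by rw [Matrix.mul_smul]; exact map_smul (gibbsLinearMap β μ ε) _ _)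

theorem linearIndependent_sProd : LinearIndependent ℂ (sProd n β μ ε) :=
  LinearMap.linearIndependent_of_isOrthoᵢ (B := gnsForm β μ ε)
    (LinearMap.isOrthoᵢ_def.2 fun Z Z' h => by
      simp [gnsForm, gibbs_conjTranspose_sProd_mul_sProd, h])
    (fun Z => by simp [gnsForm, gibbs_conjTranspose_sProd_mul_sProd])

theorem span_range_sProd :
    Submodule.span ℂ (Set.range (sProd n β μ ε)) =
      LinearMap.range (Matrix.diagonalLinearMap _ ℂ ℂ) := by
  have hcomp : Matrix.diagonalLinearMap _ ℂ ℂ ∘ sigmaDiag β μ ε = sProd n β μ ε :=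
    funext fun Z => (sProd_eq_diagonal β μ ε Z).symm
  have hli : LinearIndependent ℂ (sigmaDiag β μ ε) :=
    .of_comp _ (hcomp ▸ linearIndependent_sProd β μ ε)
  have hspan : Submodule.span ℂ (Set.range (sigmaDiag β μ ε)) = ⊤ :=
    hli.span_eq_top_of_card_eq_finrank
      (by simp [Fintype.card_finset, Module.finrank_fintype_fun_eq_card])
  rw [← hcomp, Set.range_comp, Submodule.span_image, hspan, Submodule.map_top]

theorem sProd_mem_adjoin (Z : Finset (Fin n)) :
    sProd n β μ ε Z ∈ Algebra.adjoin ℂ (Set.range (numOp n)) := by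
  refine Subalgebra.list_prod_mem _ fun A hA => ?_
  obtain ⟨x, -, rfl⟩ := List.mem_map.1 hA
  have hx : numOp n x ∈ Algebra.adjoin ℂ (Set.range (numOp n)) := Algebra.subset_adjoin ⟨x, rfl⟩
  exact Subalgebra.sub_mem _ (Subalgebra.smul_mem _ hx _)
    (Subalgebra.smul_mem _ (Subalgebra.sub_mem _ (Subalgebra.one_mem _) hx) _)

theorem mem_span_sProd_of_mem_adjoin {A : FermionAlg n}
    (hA : A ∈ Algebra.adjoin ℂ (Set.range (numOp n))) :
    A ∈ Submodule.span ℂ (Set.range (sProd n β μ ε)) := by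
  have hdiag : Algebra.adjoin ℂ (Set.range (numOp n)) ≤ (Matrix.diagonalAlgHom ℂ).range :=
    Algebra.adjoin_le (by rintro _ ⟨k, rfl⟩; exact ⟨_, (numOp_eq_diagonal k).symm⟩)
  obtain ⟨f, rfl⟩ := hdiag hA
  rw [span_range_sProd]
  exact ⟨f, rfl⟩

theorem range_sProd :
    Set.range (sProd n β μ ε) = insert 1 {B | ∃ Z, Z ≠ ∅ ∧ B = sProd n β μ ε Z} := by
  ext B
  constructor
  · rintro ⟨Z, rfl⟩
    rcases eq_or_ne Z ∅ with rfl | hZ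
    · exact Or.inl (sProd_empty β μ ε)
    · exact Or.inr ⟨Z, hZ, rfl⟩
  · rintro (rfl | ⟨Z, -, rfl⟩)
    exacts [⟨∅, sProd_empty β μ ε⟩, ⟨Z, rfl⟩]

theorem mem_span_sProd_of_gibbs_eq_zero {A : FermionAlg n}
    (hA : A ∈ Submodule.span ℂ (Set.range (sProd n β μ ε))) (hρ : gibbs n ε μ β A = 0) :
    A ∈ Submodule.span ℂ {B | ∃ Z, Z ≠ ∅ ∧ B = sProd n β μ ε Z} := by
  rw [range_sProd, Submodule.mem_span_insert] at hA
  obtain ⟨a, B, hB, rfl⟩ := hA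
  have hB0 : gibbs n ε μ β B = 0 := by
    refine (Submodule.span_le (p := LinearMap.ker (gibbsLinearMap β μ ε))).2 ?_ hB
    rintro _ ⟨Z, hZ, rfl⟩
    exact gibbs_sProd_of_ne_empty β μ ε hZ
  have ha : a = 0 := by
    simpa [gibbs_one, hB0] using (map_add (gibbsLinearMap β μ ε) (a • 1) B).symm.trans hρ
  rwa [ha, zero_smul, zero_add]

end

theorem sigma_orthonormal_basis_of_K_general
    (n : ℕ) (β μ : ℝ) (ε : Fin n → ℝ) :
    (∀ Z : Finset (Fin n), Z ≠ ∅ →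
      sProd n β μ ε Z ∈ Algebra.adjoin ℂ (Set.range (numOp n)) ∧
      gibbs n ε μ β (sProd n β μ ε Z) = 0) ∧
    (∀ Z Z' : Finset (Fin n), Z ≠ ∅ → Z' ≠ ∅ →
      gibbs n ε μ β ((sProd n β μ ε Z)ᴴ * sProd n β μ ε Z')
        = if Z = Z' then 1 else 0) ∧
    (∀ A : FermionAlg n, A ∈ Algebra.adjoin ℂ (Set.range (numOp n)) →
      gibbs n ε μ β A = 0 →
      A ∈ Submodule.span ℂ
        {B : FermionAlg n | ∃ Z : Finset (Fin n), Z ≠ ∅ ∧ B = sProd n β μ ε Z}) :=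
  ⟨fun _ hZ => ⟨sProd_mem_adjoin β μ ε _, gibbs_sProd_of_ne_empty β μ ε hZ⟩,
    fun Z Z' _ _ => gibbs_conjTranspose_sProd_mul_sProd β μ ε Z Z',
    fun _ hA hρ =>
      mem_span_sProd_of_gibbs_eq_zero β μ ε (mem_span_sProd_of_mem_adjoin β μ ε hA) hρ⟩

/-- Let `𝔠 ⊆ M` be the commutative unital subalgebra generated by the
number operators `{n_k}` and let `K = { A ∈ 𝔠 : ρ(A) = 0 }` be the subspace of elements of
`𝔠` orthogonal to the identity in the GNS inner product `⟨A,B⟩ = ρ(AᴴB)`.  Then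
`{ σ_Z : Z nonempty subset of Fin n }` is an orthonormal basis of `K`: each `σ_Z` lies in
`K`, the family is orthonormal, and it spans `K`. -/
theorem sigma_orthonormal_basis_of_K
    (n : ℕ) (hn : 1 ≤ n) (β μ : ℝ) (hβ : 0 < β) (ε : Fin n → ℝ) :
    (∀ Z : Finset (Fin n), Z ≠ ∅ →
      sProd n β μ ε Z ∈ Algebra.adjoin ℂ (Set.range (numOp n)) ∧
      gibbs n ε μ β (sProd n β μ ε Z) = 0) ∧
    (∀ Z Z' : Finset (Fin n), Z ≠ ∅ → Z' ≠ ∅ →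
      gibbs n ε μ β ((sProd n β μ ε Z)ᴴ * sProd n β μ ε Z')
        = if Z = Z' then 1 else 0) ∧
    (∀ A : FermionAlg n, A ∈ Algebra.adjoin ℂ (Set.range (numOp n)) →
      gibbs n ε μ β A = 0 →
      A ∈ Submodule.span ℂ
        {B : FermionAlg n | ∃ Z : Finset (Fin n), Z ≠ ∅ ∧ B = sProd n β μ ε Z}) :=
  sigma_orthonormal_basis_of_K_general n β μ ε

end
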